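/- arXiv:2302.09492 — 4 statements merged into one kernel-verified Lean document; each statement's English description precedes it below -/
import Mathlib

section
/- Assume the continuum hypothesis 2^{ℵ₀} = ℵ₁. Then ω₂ → (ω₂-stationary, ω₁)²: for every coloring d : [ω₂]² → {0,1} of the pairs of ordinals below ω₂, either there exists a set X ⊆ ω₂ of order type ω₁ such that d is constantly 1 on [X]², or there exists a stationary set S ⊆ ω₂ such that d is constantly 0 on [S]². -/
noncomputable def omega1 : Ordinal := (Cardinal.aleph 1).ord
noncomputable def omega2 : Ordinal := (Cardinal.aleph 2).ord

/-- `C` is a club in `κ`: a subset of `κ` that is unbounded in `κ` and closed,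
i.e. it contains every limit ordinal `δ < κ` in which `C ∩ δ` is unbounded. -/
def IsClubIn (C : Set Ordinal) (κ : Ordinal) : Prop :=
  C ⊆ Set.Iio κ ∧
  (∀ α < κ, ∃ β ∈ C, α < β) ∧
  (∀ δ < κ, Order.IsSuccLimit δ → (∀ α < δ, ∃ β ∈ C, α < β ∧ β < δ) → δ ∈ C)

/-- `S` is stationary in `κ`: it meets every club subset of `κ`. -/
def IsStationaryIn (S : Set Ordinal) (κ : Ordinal) : Prop :=
  ∀ C : Set Ordinal, IsClubIn C κ → (S ∩ C).Nonempty

/-!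
Suppose no `1`-homogeneous set has order type `ω₁`. For `y < ω₂` let `T y` be the chain chosen
greedily below `y` among the ordinals `1`-connected to `y` and to all earlier members; it is then
countable. If `x < y`, `T x = T y` and `d x y = 1`, then `x` would be a further member of `T y`, so
each fibre `{δ | T δ = T}` is `0`-homogeneous and, if no such set is stationary, misses a club
`C T`. Under CH each `β < ω₂` has only `ℵ₁` countable subsets, so the diagonal intersection over
`β` of the clubs `⋂ {C T | T ⊆ β countable}` is a club. It contains some `δ` of uncountable
cofinality; then `T δ ⊆ β` for some `β < δ`, whence `δ ∈ C (T δ)`, a contradiction.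
-/

open Cardinal Set Order

universe u v

lemma two_power_aleph0_eq_aleph_one_of_univ (h : (2 : Cardinal.{v}) ^ aleph 0 = aleph 1) :
    (2 : Cardinal.{u}) ^ ℵ₀ = ℵ₁ := by
  apply lift_injective.{v}
  simpa [two_power_aleph0] using congrArg lift.{u} h

lemma mk_countable_subsets_le_aleph_one {α : Type u} (hCH : (2 : Cardinal.{u}) ^ ℵ₀ = ℵ₁)
    {s : Set α} (hs : #s ≤ ℵ₁) : #{t : Set α // t ⊆ s ∧ t.Countable} ≤ ℵ₁ :=
  calc #{t : Set α // t ⊆ s ∧ t.Countable} = #{t : Set α // t ⊆ s ∧ #t ≤ ℵ₀} := by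
        simp only [le_aleph0_iff_set_countable]
    _ ≤ max #s ℵ₀ ^ ℵ₀ := mk_bounded_subset_le s ℵ₀
    _ ≤ ℵ₁ ^ ℵ₀ := power_le_power_right (max_le hs aleph0_lt_aleph_one.le)
    _ = ℵ₁ := by rw [← hCH, ← power_mul, aleph0_mul_aleph0]

lemma isRegular_aleph_two : (ℵ_ 2 : Cardinal.{u}).IsRegular := by
  simpa [one_add_one_eq_two] using isRegular_aleph_add_one (1 : Ordinal.{u})

lemma aleph_one_lt_aleph_two : (ℵ₁ : Cardinal.{u}) < ℵ_ 2 :=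
  aleph_lt_aleph.2 one_lt_two

lemma card_le_aleph_one_of_lt_omega2 {β : Ordinal.{u}} (hβ : β < omega2) : β.card ≤ ℵ₁ := by
  rwa [omega2, lt_ord, ← one_add_one_eq_two, ← succ_aleph, lt_succ_iff] at hβ

lemma countable_Iio_of_lt_omega1 {i : Ordinal.{u}} (hi : i < omega1) : (Iio i).Countable := by
  rw [← le_aleph0_iff_set_countable, Cardinal.mk_Iio_ordinal, ← lift_aleph0.{u + 1, u}, lift_le]
  rwa [omega1, lt_ord, ← zero_add 1, ← succ_aleph, lt_succ_iff, aleph_zero] at hi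

lemma lift_mk_countable_subsets_Iio_lt (hCH : (2 : Cardinal.{u + 1}) ^ ℵ₀ = ℵ₁)
    {β : Ordinal.{u}} (hβ : β < omega2) :
    lift.{u} #{t : Set Ordinal.{u} // t ⊆ Iio β ∧ t.Countable} <
      lift.{u + 1} (ℵ_ 2 : Cardinal.{u}) := by
  rw [Cardinal.lift_id'.{u, u + 1}, lift_aleph, Ordinal.lift_ofNat]
  refine (mk_countable_subsets_le_aleph_one hCH ?_).trans_lt aleph_one_lt_aleph_two
  have := lift_le.{u + 1}.2 (card_le_aleph_one_of_lt_omega2 hβ)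
  rwa [lift_aleph, Ordinal.lift_one, ← Cardinal.mk_Iio_ordinal] at this

lemma lift_omega1 : Ordinal.lift.{u} omega1.{v} = Ordinal.lift.{v} omega1.{u} := by
  simp [omega1]

lemma exists_strictMonoOn_mapsTo_Iio_omega1 : ∃ g : Ordinal.{v} → Ordinal.{u},
    StrictMonoOn g (Iio omega1) ∧ MapsTo g (Iio omega1) (Iio omega1) := by
  have key : ∀ i ∈ Iio omega1.{v},
      ∃ j ∈ Iio omega1.{u}, Ordinal.lift.{v} j = Ordinal.lift.{u} i := by
    intro i hi
    have hi' : Ordinal.lift.{u} i < Ordinal.lift.{v} omega1.{u} := by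
      rw [← lift_omega1]
      exact Ordinal.lift_lt.2 hi
    exact Ordinal.lt_lift_iff.1 hi'
  choose! g hg hgi using key
  refine ⟨g, fun i hi j hj hij => ?_, hg⟩
  rw [← Ordinal.lift_lt.{v}, hgi i hi, hgi j hj]
  exact Ordinal.lift_lt.2 hij

lemma not_bddAbove_union_Ici (s : Set Ordinal.{u}) (y : Ordinal.{u}) : ¬ BddAbove (s ∪ Ici y) :=
  not_bddAbove_iff.2 fun a =>
    ⟨succ (max a y), Or.inr (mem_Ici.2 ((le_max_right _ _).trans (le_succ _))),
      lt_succ_of_le (le_max_left _ _)⟩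

lemma exists_strictMonoOn_omega1_of_not_countable {s : Set Ordinal.{u}} (hs : ¬ s.Countable)
    {y : Ordinal.{u}} (hsy : s ⊆ Iio y) :
    ∃ f : Ordinal.{v} → Ordinal.{u}, StrictMonoOn f (Iio omega1) ∧ ∀ i < omega1, f i ∈ s := by
  set t := s ∪ Ici y
  have ht : ¬ BddAbove t := not_bddAbove_union_Ici s y
  have hmem : ∀ i < omega1, Ordinal.enumOrd t i ∈ s := by
    intro i hi
    -- otherwise all of `s` is enumerated before `i`
    refine (Ordinal.enumOrd_mem ht i).resolve_right fun hyi => hs ?_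
    refine ((countable_Iio_of_lt_omega1 hi).image (Ordinal.enumOrd t)).mono fun x hx => ?_
    obtain ⟨j, rfl⟩ := Ordinal.enumOrd_surjective ht (Or.inl hx)
    exact ⟨j, (Ordinal.enumOrd_lt_enumOrd ht).1 ((hsy hx).trans_le hyi), rfl⟩
  obtain ⟨g, hg, hgω⟩ := exists_strictMonoOn_mapsTo_Iio_omega1.{u, v}
  exact ⟨Ordinal.enumOrd t ∘ g, (Ordinal.enumOrd_strictMono ht).comp_strictMonoOn hg,
    fun i hi => hmem _ (hgω (mem_Iio.2 hi))⟩

noncomputable def nextIn (C : Set Ordinal.{u}) (x : Ordinal.{u}) : Ordinal.{u} :=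
  sInf {y | y ∈ C ∧ x < y}

section Club

variable {C : Set Ordinal.{u}} {κ x : Ordinal.{u}}

lemma IsClubIn.nextIn_mem (hC : IsClubIn C κ) (hx : x < κ) : nextIn C x ∈ C :=
  (csInf_mem (hC.2.1 x hx)).1

lemma IsClubIn.lt_nextIn (hC : IsClubIn C κ) (hx : x < κ) : x < nextIn C x :=
  (csInf_mem (hC.2.1 x hx)).2

lemma IsClubIn.nextIn_lt (hC : IsClubIn C κ) (hx : x < κ) : nextIn C x < κ :=
  hC.1 (hC.nextIn_mem hx)

variable {c : Cardinal.{u}}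

lemma iSup_Iio_lt_ord (hc : c.IsRegular) {o : Ordinal.{u}} (ho : o < c.ord)
    {f : Ordinal.{u} → Ordinal.{u}} (hf : ∀ i < o, f i < c.ord) :
    ⨆ i : Iio o, f i < c.ord := by
  refine Ordinal.lift_iSup_lt_of_lt_cof ?_ fun i => hf i i.2
  rw [Cardinal.mk_Iio_ordinal, ← Ordinal.lift_cof, hc.cof_ord, lift_lift, lift_lt]
  exact lt_ord.1 ho

lemma exists_closure_point (hc : c.IsRegular) (hc₀ : ℵ₀ < c) {F : Ordinal.{u} → Ordinal.{u}}
    (hF : ∀ x < c.ord, F x < c.ord) {α : Ordinal.{u}} (hα : α < c.ord) :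
    ∃ δ, α < δ ∧ δ < c.ord ∧ IsSuccLimit δ ∧ ∀ x < δ, F x < δ := by
  -- `H s` exceeds `s` and every `F x` with `x < s`, so the limit of the iterates of `H`
  -- is closed under `F` and under successor
  set H : Ordinal.{u} → Ordinal.{u} := fun s => succ (max s (⨆ x : Iio s, F x))
  have hH : ∀ s < c.ord, H s < c.ord := fun s hs =>
    (isSuccLimit_ord hc.aleph0_le).succ_lt
      (max_lt hs (iSup_Iio_lt_ord hc hs fun x hx => hF x (hx.trans hs)))
  have hsH : ∀ s, s < H s := fun s => lt_succ_of_le (le_max_left _ _)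
  have hFH : ∀ {x s : Ordinal.{u}}, x < s → F x < H s := fun {x s} hxs =>
    lt_succ_of_le ((Ordinal.le_iSup (fun y : Iio s => F y) ⟨x, hxs⟩).trans (le_max_right _ _))
  have hstep : ∀ x < Ordinal.nfp H α, ∃ s, x < s ∧ H s ≤ Ordinal.nfp H α := fun x hx => by
    obtain ⟨n, hn⟩ := Ordinal.lt_nfp_iff.1 hx
    refine ⟨_, hn, ?_⟩
    simpa [Function.iterate_succ_apply'] using Ordinal.iterate_le_nfp H α (n + 1)
  have hαδ : α < Ordinal.nfp H α := (hsH α).trans_le (Ordinal.iterate_le_nfp H α 1)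
  refine ⟨_, hαδ, Cardinal.nfp_lt_ord_of_isRegular hc hc₀.ne' hH hα, ?_, fun x hx => ?_⟩
  · refine Ordinal.isSuccLimit_iff.2 ⟨hαδ.ne_bot, isSuccPrelimit_iff_succ_lt.2 fun x hx => ?_⟩
    obtain ⟨s, hxs, hs⟩ := hstep x hx
    exact (succ_le_of_lt hxs).trans_lt ((hsH s).trans_le hs)
  · obtain ⟨s, hxs, hs⟩ := hstep x hx
    exact (hFH hxs).trans_le hs

lemma isClubIn_iInter (hc : c.IsRegular) (hc₀ : ℵ₀ < c) {ι : Type v}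
    (hι : lift.{u} #ι < lift.{v} c) {C : ι → Set Ordinal.{u}} (hC : ∀ i, IsClubIn (C i) c.ord) :
    IsClubIn {x | x < c.ord ∧ ∀ i, x ∈ C i} c.ord := by
  refine ⟨fun x hx => hx.1, fun α hα => ?_, fun δ hδ hδlim hδC => ⟨hδ, fun i => ?_⟩⟩
  · have hF : ∀ x < c.ord, ⨆ i, nextIn (C i) x < c.ord := fun x hx => by
      refine Ordinal.lift_iSup_lt_of_lt_cof ?_ fun i => (hC i).nextIn_lt hx
      rwa [← Ordinal.lift_cof, hc.cof_ord]
    obtain ⟨δ, hαδ, hδ, hδlim, hδF⟩ := exists_closure_point hc hc₀ hF hα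
    refine ⟨δ, ⟨hδ, fun i => (hC i).2.2 δ hδ hδlim fun γ hγ => ?_⟩, hαδ⟩
    have hγ' := hγ.trans hδ
    refine ⟨_, (hC i).nextIn_mem hγ', (hC i).lt_nextIn hγ', (hδF γ hγ).trans_le' ?_⟩
    exact le_ciSup ⟨c.ord, forall_mem_range.2 fun j => ((hC j).nextIn_lt hγ').le⟩ i
  · refine (hC i).2.2 δ hδ hδlim fun α hα => ?_
    obtain ⟨β, hβ, hαβ, hβδ⟩ := hδC α hα
    exact ⟨β, hβ.2 i, hαβ, hβδ⟩

lemma isClubIn_diagInter (hc : c.IsRegular) (hc₀ : ℵ₀ < c) {C : Ordinal.{u} → Set Ordinal.{u}}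
    (hC : ∀ i < c.ord, IsClubIn (C i) c.ord) :
    IsClubIn {x | x < c.ord ∧ ∀ i < x, x ∈ C i} c.ord := by
  refine ⟨fun x hx => hx.1, fun α hα => ?_, fun δ hδ hδlim hδC => ⟨hδ, fun i hi => ?_⟩⟩
  · have hF : ∀ x < c.ord, ⨆ i : Iio x, nextIn (C i) x < c.ord := fun x hx =>
      iSup_Iio_lt_ord hc hx fun i hi => (hC i (hi.trans hx)).nextIn_lt hx
    obtain ⟨δ, hαδ, hδ, hδlim, hδF⟩ := exists_closure_point hc hc₀ hF hα
    refine ⟨δ, ⟨hδ, fun i hi => (hC i (hi.trans hδ)).2.2 δ hδ hδlim fun γ hγ => ?_⟩, hαδ⟩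
    set x := succ (max i γ)
    have hx : x < δ := hδlim.succ_lt (max_lt hi hγ)
    have hCi := hC i (hi.trans hδ)
    refine ⟨_, hCi.nextIn_mem (hx.trans hδ),
      (lt_succ_of_le (le_max_right i γ)).trans (hCi.lt_nextIn (hx.trans hδ)),
      (hδF x hx).trans_le' ?_⟩
    exact Ordinal.le_iSup (fun j : Iio x => nextIn (C j) x) ⟨i, lt_succ_of_le (le_max_left i γ)⟩
  · refine (hC i (hi.trans hδ)).2.2 δ hδ hδlim fun α hα => ?_
    obtain ⟨β, hβ, hαβ, hβδ⟩ := hδC (max i α) (max_lt hi hα)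
    exact ⟨β, hβ.2 i ((le_max_left i α).trans_lt hαβ), (le_max_right i α).trans_lt hαβ, hβδ⟩

lemma IsClubIn.enumOrd_mem (hc : c.IsRegular) (hC : IsClubIn C c.ord) {i : Ordinal.{u}}
    (hi : i < c.ord) : Ordinal.enumOrd (C ∪ Ici c.ord) i ∈ C := by
  induction i using WellFoundedLT.induction with
  | _ i IH =>
    obtain ⟨a, ha, hfa⟩ :=
      hC.2.1 _ (iSup_Iio_lt_ord hc hi fun j hj => hC.1 (IH j hj (hj.trans hi)))
    have hia : Ordinal.enumOrd (C ∪ Ici c.ord) i ≤ a :=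
      Ordinal.enumOrd_le_of_forall_lt (Or.inl ha) fun j hj =>
        (Ordinal.le_iSup (fun j : Iio i => Ordinal.enumOrd (C ∪ Ici c.ord) j) ⟨j, hj⟩).trans_lt hfa
    exact (Ordinal.enumOrd_mem (not_bddAbove_union_Ici C c.ord) i).resolve_right
      (hia.trans_lt (hC.1 ha)).not_ge

lemma IsClubIn.exists_mem_aleph0_lt_cof (hc : c.IsRegular) (hc₁ : ℵ₁ < c)
    (hC : IsClubIn C c.ord) : ∃ δ ∈ C, ℵ₀ < δ.cof := by
  set f := Ordinal.enumOrd (C ∪ Ici c.ord)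
  have hω₁ : omega1 < c.ord := ord_lt_ord.2 hc₁
  have hω₁lim : IsSuccLimit omega1 := isSuccLimit_ord (aleph0_le_aleph 1)
  have hfC : ∀ i < omega1, f i ∈ C := fun i hi => hC.enumOrd_mem hc (hi.trans hω₁)
  have hmono : StrictMono fun i : Iio omega1 => f i :=
    (Ordinal.enumOrd_strictMono (not_bddAbove_union_Ici C c.ord)).comp (Subtype.strictMono_coe _)
  -- the supremum of the first `ω₁` elements of `C`
  have hcof : (⨆ i : Iio omega1, f i).cof = ℵ₁ := by
    rw [Ordinal.cof_iSup_Iio hmono hω₁lim.isSuccPrelimit, omega1, isRegular_aleph_one.cof_ord]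
  refine ⟨_, hC.2.2 _ (iSup_Iio_lt_ord hc hω₁ fun i hi => hC.1 (hfC i hi))
    (Ordinal.one_lt_cof_iff.1 (hcof ▸ one_lt_aleph0.trans aleph0_lt_aleph_one)) fun α hα => ?_,
    hcof ▸ aleph0_lt_aleph_one⟩
  obtain ⟨⟨i, hi⟩, hαi⟩ := Ordinal.lt_iSup_iff.1 hα
  have hi' : succ i < omega1 := hω₁lim.succ_lt hi
  refine ⟨f i, hfC i hi, hαi, (Ordinal.le_iSup _ ⟨succ i, hi'⟩).trans_lt' ?_⟩
  exact hmono (show (⟨i, hi⟩ : Iio omega1) < ⟨succ i, hi'⟩ from lt_succ i)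

end Club

lemma Set.Countable.exists_lt_subset_Iio {T : Set Ordinal.{u}} (hT : T.Countable)
    {δ : Ordinal.{u}} (hδ : ℵ₀ < δ.cof) (hTδ : T ⊆ Iio δ) : ∃ b < δ, T ⊆ Iio b := by
  have hlim : IsSuccLimit δ := Ordinal.one_lt_cof_iff.1 (one_lt_aleph0.trans hδ)
  have hsucc : ∀ t : T, succ t.1 < δ := fun t => hlim.succ_lt (hTδ t.2)
  refine ⟨⨆ t : T, succ t.1, Ordinal.lift_iSup_lt_of_lt_cof ?_ hsucc, fun t ht => ?_⟩
  · rw [Cardinal.lift_id'.{u, u + 1}, ← Ordinal.lift_cof]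
    have hδ' := lift_lt.{u, u + 1}.2 hδ
    rw [lift_aleph0] at hδ'
    exact hT.le_aleph0.trans_lt hδ'
  · exact (lt_succ t).trans_le (le_ciSup ⟨δ, forall_mem_range.2 fun t => (hsucc t).le⟩ ⟨t, ht⟩)

section GreedyChain

variable (d : Ordinal.{u} → Ordinal.{u} → Fin 2)

/-- `x` joins the chain iff it is `1`-connected to `y` and to every earlier member: this is the
chain obtained by always adding the least admissible ordinal, written as a recursion on `x`. -/
def greedyChain (y : Ordinal.{u}) : Set Ordinal.{u} :=
  {x | wellFounded_lt.fix (fun x IH => x < y ∧ d x y = 1 ∧ ∀ c (hc : c < x), IH c hc → d c x = 1) x}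

variable {d}

lemma mem_greedyChain {x y : Ordinal.{u}} :
    x ∈ greedyChain d y ↔ x < y ∧ d x y = 1 ∧ ∀ c < x, c ∈ greedyChain d y → d c x = 1 := by
  rw [greedyChain, mem_ofPred_eq, WellFounded.fix_eq]
  rfl

lemma greedyChain_subset_Iio (y : Ordinal.{u}) : greedyChain d y ⊆ Iio y :=
  fun _ hx => (mem_greedyChain.1 hx).1

lemma color_eq_zero_of_greedyChain_eq {x y : Ordinal.{u}} (hxy : x < y)
    (h : greedyChain d x = greedyChain d y) : d x y = 0 := by
  by_contra hne
  have hx : x ∈ greedyChain d y :=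
    mem_greedyChain.2 ⟨hxy, by omega, fun c _ hc => (mem_greedyChain.1 (h ▸ hc)).2.1⟩
  rw [← h] at hx
  exact (mem_Iio.1 (greedyChain_subset_Iio x hx)).false

lemma exists_homogeneous_of_not_countable_greedyChain {y : Ordinal.{u}} (hy : y < omega2)
    (hT : ¬ (greedyChain d y).Countable) :
    ∃ f : Ordinal.{v} → Ordinal.{u}, StrictMonoOn f (Iio omega1) ∧
      (∀ i < omega1, f i < omega2) ∧ (∀ i < omega1, ∀ j < omega1, i < j → d (f i) (f j) = 1) := by
  obtain ⟨f, hf, hfT⟩ := exists_strictMonoOn_omega1_of_not_countable hT (greedyChain_subset_Iio y)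
  exact ⟨f, hf, fun i hi => (greedyChain_subset_Iio y (hfT i hi)).trans hy,
    fun i hi j hj hij => (mem_greedyChain.1 (hfT j hj)).2.2 _ (hf hi hj hij) (hfT i hi)⟩

lemma exists_isClubIn_forall_greedyChain_ne
    (hstat : ¬ ∃ S : Set Ordinal.{u}, S ⊆ Iio omega2 ∧ IsStationaryIn S omega2 ∧
      ∀ α ∈ S, ∀ β ∈ S, α < β → d α β = 0) (T : Set Ordinal.{u}) :
    ∃ C, IsClubIn C omega2 ∧ ∀ δ ∈ C, greedyChain d δ ≠ T := by
  have hT : ¬ IsStationaryIn {δ | δ < omega2 ∧ greedyChain d δ = T} omega2 := fun hS =>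
    hstat ⟨_, fun δ hδ => hδ.1, hS, fun α hα β hβ hαβ =>
      color_eq_zero_of_greedyChain_eq hαβ (hα.2.trans hβ.2.symm)⟩
  simp only [IsStationaryIn, not_forall] at hT
  obtain ⟨C, hC, hempty⟩ := hT
  exact ⟨C, hC, fun δ hδ hδT => hempty ⟨δ, ⟨hC.1 hδ, hδT⟩, hδ⟩⟩

end GreedyChain

/-- Assume CH.  Then `ω₂ → (ω₂-stationary, ω₁)²`: for every 2-coloring `d` of pairs of
ordinals below `ω₂`, either there is a set of order type `ω₁` (given as the image of a
strictly monotone map on `ω₁`, with values below `ω₂`) on whose pairs `d` is constantly `1`,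
or there is a stationary subset of `ω₂` on whose pairs `d` is constantly `0`. -/
theorem stmt0
    (hCH : (2 : Cardinal) ^ Cardinal.aleph 0 = Cardinal.aleph 1)
    (d : Ordinal → Ordinal → Fin 2) :
    (∃ f : Ordinal → Ordinal,
      StrictMonoOn f (Set.Iio omega1) ∧
      (∀ i < omega1, f i < omega2) ∧
      (∀ i < omega1, ∀ j < omega1, i < j → d (f i) (f j) = 1)) ∨
    (∃ S : Set Ordinal,
      S ⊆ Set.Iio omega2 ∧
      IsStationaryIn S omega2 ∧
      (∀ α ∈ S, ∀ β ∈ S, α < β → d α β = 0)) := by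
  refine or_iff_not_imp_left.2 fun hchain => ?_
  by_contra hstat
  have hT : ∀ y < omega2, (greedyChain d y).Countable := fun y hy =>
    not_not.1 fun h => hchain (exists_homogeneous_of_not_countable_greedyChain hy h)
  choose C hC hCT using exists_isClubIn_forall_greedyChain_ne hstat
  have h₀ : ℵ₀ < ℵ_ 2 := aleph0_lt_aleph_one.trans aleph_one_lt_aleph_two
  have hD : ∀ β < omega2, IsClubIn
      {x | x < omega2 ∧ ∀ t : {t : Set Ordinal // t ⊆ Iio β ∧ t.Countable}, x ∈ C t} omega2 :=
    fun β hβ => isClubIn_iInter isRegular_aleph_two h₀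
      (lift_mk_countable_subsets_Iio_lt (two_power_aleph0_eq_aleph_one_of_univ hCH) hβ)
      fun t => hC t
  obtain ⟨δ, ⟨hδ, hδD⟩, hcof⟩ := IsClubIn.exists_mem_aleph0_lt_cof isRegular_aleph_two
    aleph_one_lt_aleph_two (isClubIn_diagInter isRegular_aleph_two h₀ hD)
  obtain ⟨b, hb, hTb⟩ := (hT δ hδ).exists_lt_subset_Iio hcof (greedyChain_subset_Iio δ)
  exact hCT _ δ ((hδD b hb).2 ⟨_, hTb, hT δ hδ⟩) rfl
end

section
/- Let G = (V, E) be a graph with no infinite path, let A be a set of vertices, and let B be an infinite independent set of vertices such that every vertex v ∉ A is adjacent to at most finitely many elements of B. Then there exist distinct x, y ∈ B such that no vertex v ∉ A is adjacent to both x and y. -/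
/-- A set of vertices is independent if no two of its elements are adjacent. -/
def IsIndependent {α : Type*} (G : SimpleGraph α) (W : Set α) : Prop :=
  ∀ x ∈ W, ∀ y ∈ W, ¬ G.Adj x y

/-- `G` has an infinite path: an injective sequence of vertices in which any two
consecutive vertices are adjacent. -/
def HasInfinitePath {α : Type*} (G : SimpleGraph α) : Prop :=
  ∃ f : ℕ → α, Function.Injective f ∧ ∀ n : ℕ, G.Adj (f n) (f (n + 1))

/-!
Suppose every two distinct vertices of `B` had a common neighbour outside `A`. Build greedily
`b₀, b₁, … ∈ B` together with common neighbours `vₙ` of `bₙ` and `bₙ₊₁`, always picking `bₙ₊₁`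
outside the finite set of the earlier `bᵢ` and of the `B`-neighbours of the earlier `vᵢ`; this is
possible because `B` is infinite. Then the `bₙ` are distinct, and so are the `vₙ`: if `vᵢ = vⱼ`
with `i < j`, then `bⱼ₊₁` would be a `B`-neighbour of `vᵢ`. Independence of `B` keeps the `vₙ`
out of `B`, so `b₀ v₀ b₁ v₁ …` is an infinite path.
-/

open Function

theorem exists_seq_of_forall_exists_mem {σ : Type*} {S : Set σ} {R : σ → σ → Prop} {s₀ : σ}
    (h₀ : s₀ ∈ S) (h : ∀ s ∈ S, ∃ t ∈ S, R s t) :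
    ∃ f : ℕ → σ, (∀ n, f n ∈ S) ∧ ∀ n, R (f n) (f (n + 1)) := by
  choose! g hgS hgR using h
  have hS : ∀ n, g^[n] s₀ ∈ S := fun n => by
    induction n with
    | zero => exact h₀
    | succ n ih => exact iterate_succ_apply' g n s₀ ▸ hgS _ ih
  refine ⟨fun n => g^[n] s₀, hS, fun n => ?_⟩
  simpa only [iterate_succ_apply'] using hgR _ (hS n)

section
variable {α : Type*} (G : SimpleGraph α)

theorem hasInfinitePath_of_interleave {b v : ℕ → α} (hb : Injective b) (hv : Injective v)
    (hbv : ∀ m n, b m ≠ v n) (hbv_adj : ∀ n, G.Adj (b n) (v n))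
    (hvb_adj : ∀ n, G.Adj (v n) (b (n + 1))) : HasInfinitePath G := by
  let e := Equiv.natSumNatEquivNat
  have hb_even : ∀ m, Sum.elim b v (e.symm (2 * m)) = b m := fun m => by
    rw [show 2 * m = e (.inl m) by simp [e], e.symm_apply_apply]; rfl
  have hv_odd : ∀ m, Sum.elim b v (e.symm (2 * m + 1)) = v m := fun m => by
    rw [show 2 * m + 1 = e (.inr m) by simp [e], e.symm_apply_apply]; rfl
  refine ⟨Sum.elim b v ∘ e.symm, (hb.sumElim hv hbv).comp e.symm.injective, fun n => ?_⟩
  obtain ⟨m, rfl | rfl⟩ := Nat.even_or_odd' n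
  · simpa only [comp_apply, hb_even, hv_odd] using hbv_adj m
  · simpa only [comp_apply, hv_odd, show 2 * m + 1 + 1 = 2 * (m + 1) by ring, hb_even]
      using hvb_adj m

theorem exists_interleave_of_forall_exists_commonNeighbor {B : Set α} (hB : B.Infinite)
    (hcommon : ∀ x ∈ B, ∀ y ∈ B, x ≠ y →
      ∃ v, {c ∈ B | G.Adj v c}.Finite ∧ G.Adj v x ∧ G.Adj v y) :
    ∃ b v : ℕ → α, (∀ n, b n ∈ B) ∧ Injective b ∧ Injective v ∧
      ∀ n, G.Adj (b n) (v n) ∧ G.Adj (v n) (b (n + 1)) := by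
  choose! w hw_fin hw_adj_left hw_adj_right using hcommon
  set N : α → Set α := fun v => {c ∈ B | G.Adj v c}
  -- A state `(b, F)` is the current vertex `b ∈ B` and the finite set `F` the next one avoids.
  obtain ⟨b₀, hb₀⟩ := hB.nonempty
  obtain ⟨f, hfS, hfR⟩ := exists_seq_of_forall_exists_mem
    (S := {p : α × Set α | p.1 ∈ B ∧ p.1 ∈ p.2 ∧ p.2.Finite})
    (R := fun p q => q.1 ∉ p.2 ∧ p.2 ⊆ q.2 ∧ N (w p.1 q.1) ⊆ q.2)
    (s₀ := (b₀, {b₀})) ⟨hb₀, rfl, Set.finite_singleton b₀⟩ <| by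
      rintro ⟨b, F⟩ ⟨hbB, hbF, hF⟩
      obtain ⟨b', hb'B, hb'F⟩ := (hB.sdiff hF).nonempty
      have hne : b ≠ b' := fun h => hb'F (h ▸ hbF)
      exact ⟨(b', insert b' (F ∪ N (w b b'))),
        ⟨hb'B, Set.mem_insert _ _, ((hF.union (hw_fin b hbB b' hb'B hne)).insert b')⟩,
        hb'F, Set.subset_union_left.trans (Set.subset_insert _ _),
        Set.subset_union_right.trans (Set.subset_insert _ _)⟩
  have hF_mono : Monotone fun n => (f n).2 := monotone_nat_of_le_succ fun n => (hfR n).2.1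
  have hb_ne_succ : ∀ n, (f n).1 ≠ (f (n + 1)).1 := fun n h => (hfR n).1 (h ▸ (hfS n).2.1)
  refine ⟨fun n => (f n).1, fun n => w (f n).1 (f (n + 1)).1, fun n => (hfS n).1, ?_, ?_,
    fun n => ?_⟩
  · refine Injective.of_lt_imp_ne fun m n hmn (h : (f m).1 = (f n).1) => ?_
    obtain ⟨k, rfl⟩ : ∃ k, n = k + 1 := ⟨n - 1, by omega⟩
    exact (hfR k).1 (h ▸ hF_mono (Nat.le_of_lt_succ hmn) (hfS m).2.1)
  · refine Injective.of_lt_imp_ne fun i j hij (h : w _ _ = w _ _) =>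
      (hfR j).1 (hF_mono hij ((hfR i).2.2 ⟨(hfS (j + 1)).1, ?_⟩))
    exact h ▸ hw_adj_right _ (hfS j).1 _ (hfS (j + 1)).1 (hb_ne_succ j)
  · exact ⟨(hw_adj_left _ (hfS n).1 _ (hfS (n + 1)).1 (hb_ne_succ n)).symm,
      hw_adj_right _ (hfS n).1 _ (hfS (n + 1)).1 (hb_ne_succ n)⟩

end

/-- Let `G` be a graph with no infinite path, `A` a set of vertices and `B` an infinite
independent set such that every vertex outside `A` has only finitely many neighbours in
`B`.  Then some two distinct elements `x, y ∈ B` have no common neighbour outside `A`. -/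
theorem stmt5 {α : Type*} (G : SimpleGraph α) (hG : ¬ HasInfinitePath G)
    (A B : Set α)
    (hBinf : B.Infinite)
    (hBind : IsIndependent G B)
    (hfin : ∀ v ∉ A, {b ∈ B | G.Adj v b}.Finite) :
    ∃ x ∈ B, ∃ y ∈ B, x ≠ y ∧ ∀ v ∉ A, ¬ (G.Adj v x ∧ G.Adj v y) := by
  by_contra! hcommon
  obtain ⟨b, v, hbB, hb, hv, hadj⟩ :=
    exists_interleave_of_forall_exists_commonNeighbor G hBinf fun x hx y hy hxy => by
      obtain ⟨v, hvA, hvx, hvy⟩ := hcommon x hx y hy hxy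
      exact ⟨v, hfin v hvA, hvx, hvy⟩
  refine hG (hasInfinitePath_of_interleave G hb hv (fun m n h => ?_) (fun n => (hadj n).1)
    fun n => (hadj n).2)
  exact hBind _ (hbB n) _ (h ▸ hbB m) (hadj n).1
end

section
/- Let G = (V, E) be a graph with V ⊆ ω₂ × ω and with no infinite path, let β < ω₂, and let C ⊆ V ∩ ({β} × ω) be infinite. Then there exist a finite set A of vertices and an infinite set B ⊆ C such that: (a) every element of A is adjacent to every element of B; (b) every vertex not in A is adjacent to at most one element of B; and (c) B is independent. -/
/-!
A graph without infinite path has no walk visiting each vertex only finitely often. Applying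
Ramsey's dichotomy along sequences (`exists_increasing_or_nonincreasing_subseq'`) we first
shrink `C` to an infinite independent set, and then see that for finite `A` and infinite `B`
either some infinite `B' ⊆ B` has no two points with a common neighbour outside `A`, or some
vertex `x ∉ A` has infinitely many neighbours in `B`. Starting from `A = ∅`, adding such
vertices `x₀, x₁, …` to `A` while shrinking `B` to their neighbourhoods must stop: otherwise
distinct `bₙ` taken from the nested sets give the path `x₀ b₀ x₁ b₁ …`.
-/

theorem Set.exists_injective_forall_mem_of_infinite {α : Type*} {s : ℕ → Set α}
    (hs : ∀ n, (s n).Infinite) :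
    ∃ f : ℕ → α, Function.Injective f ∧ ∀ n, f n ∈ s n := by
  classical
  choose pick hpick using fun n (t : Finset α) => (hs n).exists_notMem_finset t
  let used : ℕ → Finset α := fun n => Nat.rec ∅ (fun k t => insert (pick k t) t) n
  have used_mono : Monotone used :=
    monotone_nat_of_le_succ fun n => Finset.subset_insert _ _
  refine ⟨fun n => pick n (used n), Function.Injective.of_lt_imp_ne fun m n hmn heq => ?_,
    fun n => (hpick n _).1⟩
  exact (hpick n (used n)).2 <|
    heq ▸ used_mono (Nat.succ_le_of_lt hmn) (Finset.mem_insert_self _ _)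

namespace SimpleGraph

variable {α : Type*} (G : SimpleGraph α)

/-- Following the walk and always jumping past the last visit of the current vertex
yields a path. -/
theorem hasInfinitePath_of_walk_finite_fibers (w : ℕ → α)
    (hw : ∀ n, G.Adj (w n) (w (n + 1)))
    (hfin : ∀ a, {n | w n = a}.Finite) : HasInfinitePath G := by
  let last : ℕ → ℕ := fun n => sSup {m | w m = w n}
  have last_spec : ∀ n, w (last n) = w n := fun n =>
    Nat.sSup_mem (s := {m | w m = w n}) ⟨n, rfl⟩ (hfin (w n)).bddAbove
  have le_last : ∀ n m, w m = w n → m ≤ last n := fun n m h =>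
    le_csSup (hfin (w n)).bddAbove h
  let idx : ℕ → ℕ := fun k => (fun n => last n + 1)^[k] 0
  have idx_succ : ∀ k, idx (k + 1) = last (idx k) + 1 := fun k =>
    Function.iterate_succ_apply' _ _ _
  have idx_mono : StrictMono idx := strictMono_nat_of_lt_succ fun k => by
    rw [idx_succ]; exact Nat.lt_succ_of_le (le_last _ _ rfl)
  refine ⟨w ∘ idx, Function.Injective.of_lt_imp_ne fun j k hjk heq => ?_, fun k => ?_⟩
  · have hle : idx k ≤ last (idx j) := le_last _ _ heq.symm
    have hge : idx (j + 1) ≤ idx k := idx_mono.monotone (Nat.succ_le_of_lt hjk)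
    rw [idx_succ] at hge
    omega
  · simp only [Function.comp, idx_succ]
    rw [← last_spec (idx k)]
    exact hw _

theorem hasInfinitePath_of_alternating (x y : ℕ → α) (hx : Function.Injective x)
    (hy : ∀ a, {n | y n = a}.Finite) (hxy : ∀ n, G.Adj (x n) (y n))
    (hyx : ∀ n, G.Adj (y n) (x (n + 1))) : HasInfinitePath G := by
  refine G.hasInfinitePath_of_walk_finite_fibers
    (fun n => if n % 2 = 0 then x (n / 2) else y (n / 2)) (fun n => ?_) (fun a => ?_)
  · rcases Nat.even_or_odd' n with ⟨k, rfl | rfl⟩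
    · simpa [Nat.mul_mod_right, show (2 * k + 1) % 2 = 1 by omega,
        show (2 * k + 1) / 2 = k by omega] using hxy k
    · simpa [show (2 * k + 1) % 2 = 1 by omega, show (2 * k + 1 + 1) % 2 = 0 by omega,
        show (2 * k + 1) / 2 = k by omega, show (2 * k + 1 + 1) / 2 = k + 1 by omega]
        using hyx k
  · have hxa : {n | x n = a}.Finite := (Set.finite_singleton a).preimage hx.injOn
    refine ((hxa.image (2 * ·)).union ((hy a).image (2 * · + 1))).subset fun n hn => ?_
    rcases Nat.even_or_odd' n with ⟨k, rfl | rfl⟩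
    · exact Or.inl ⟨k, by simpa using hn, rfl⟩
    · exact Or.inr ⟨k, by simpa [show (2 * k + 1) % 2 = 1 by omega,
        show (2 * k + 1) / 2 = k by omega] using hn, rfl⟩

variable {G}

theorem exists_infinite_isIndependent_subset (hG : ¬ HasInfinitePath G) {C : Set α}
    (hC : C.Infinite) : ∃ C' ⊆ C, C'.Infinite ∧ IsIndependent G C' := by
  obtain ⟨f, hf, hfC⟩ := Set.exists_injective_forall_mem_of_infinite fun _ => hC
  obtain ⟨g, hpath | hindep⟩ := exists_increasing_or_nonincreasing_subseq' G.Adj f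
  · exact absurd ⟨_, hf.comp g.injective, hpath⟩ hG
  refine ⟨Set.range (f ∘ g), Set.range_subset_iff.2 fun n => hfC _,
    Set.infinite_range_of_injective (hf.comp g.injective), ?_⟩
  rintro _ ⟨m, rfl⟩ _ ⟨n, rfl⟩
  rcases lt_trichotomy m n with h | rfl | h
  · exact hindep m n h
  · exact G.irrefl
  · exact fun hadj => hindep n m h hadj.symm

theorem exists_sparse_subset_or_exists_infinite_neighbors (hG : ¬ HasInfinitePath G)
    (A : Set α) {B : Set α} (hB : B.Infinite) :
    (∃ B' ⊆ B, B'.Infinite ∧ ∀ v ∉ A, (B' ∩ G.neighborSet v).Subsingleton) ∨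
      ∃ x ∉ A, (B ∩ G.neighborSet x).Infinite := by
  by_cases hx : ∃ x ∉ A, (B ∩ G.neighborSet x).Infinite
  · exact Or.inr hx
  push Not at hx
  left
  obtain ⟨f, hf, hfB⟩ := Set.exists_injective_forall_mem_of_infinite fun _ => hB
  obtain ⟨g, hcommon | hnone⟩ := exists_increasing_or_nonincreasing_subseq'
    (fun b b' => ∃ v ∉ A, G.Adj v b ∧ G.Adj v b') f
  · have hc : Function.Injective (f ∘ g) := hf.comp g.injective
    choose v hvA hvc hvc' using hcommon
    refine absurd (G.hasInfinitePath_of_alternating (f ∘ g) v hc (fun a => ?_)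
      (fun n => (hvc n).symm) hvc') hG
    by_cases ha : a ∈ A
    · exact Set.finite_empty.subset fun n hn => hvA n (hn ▸ ha)
    · refine ((hx a ha).preimage hc.injOn).subset fun n hn => ?_
      exact ⟨hfB _, (hn : v n = a) ▸ hvc n⟩
  refine ⟨Set.range (f ∘ g), Set.range_subset_iff.2 fun n => hfB _,
    Set.infinite_range_of_injective (hf.comp g.injective), ?_⟩
  rintro v hv _ ⟨⟨m, rfl⟩, hm⟩ _ ⟨⟨n, rfl⟩, hn⟩
  rcases lt_trichotomy m n with h | rfl | h
  · exact absurd ⟨v, hv, hm, hn⟩ (hnone m n h)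
  · rfl
  · exact absurd ⟨v, hv, hn, hm⟩ (hnone n m h)

theorem hasInfinitePath_of_antitone_subset_neighborSet (x : ℕ → α)
    (hx : Function.Injective x) {B : ℕ → Set α} (hB : Antitone B)
    (hinf : ∀ n, (B n).Infinite)
    (hadj : ∀ n, B (n + 1) ⊆ G.neighborSet (x n)) : HasInfinitePath G := by
  obtain ⟨b, hb, hbB⟩ := Set.exists_injective_forall_mem_of_infinite fun n => hinf (n + 2)
  exact G.hasInfinitePath_of_alternating x b hx
    (fun a => (Set.finite_singleton a).preimage hb.injOn)
    (fun n => hadj n (hB (Nat.le_succ _) (hbB n)))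
    (fun n => (hadj (n + 1) (hbB n)).symm)

theorem exists_finite_complete_to_sparse_subset (hG : ¬ HasInfinitePath G) {B₀ : Set α}
    (hB₀ : B₀.Infinite) :
    ∃ A B : Set α, A.Finite ∧ B ⊆ B₀ ∧ B.Infinite ∧
      (∀ a ∈ A, ∀ b ∈ B, G.Adj a b) ∧
      ∀ v ∉ A, (B ∩ G.neighborSet v).Subsingleton := by
  by_contra hno
  let State := {p : Set α × Set α // p.1.Finite ∧ p.2 ⊆ B₀ ∧ p.2.Infinite ∧
    ∀ a ∈ p.1, ∀ b ∈ p.2, G.Adj a b}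
  have step : ∀ s : State, ∃ x ∉ s.1.1, (s.1.2 ∩ G.neighborSet x).Infinite := by
    rintro ⟨⟨A, B⟩, hA, hBB₀, hB, hAB⟩
    refine (exists_sparse_subset_or_exists_infinite_neighbors hG A hB).resolve_left ?_
    rintro ⟨B', hB'B, hB', hsparse⟩
    exact hno ⟨A, B', hA, hB'B.trans hBB₀, hB', fun a ha b hb => hAB a ha b (hB'B hb),
      hsparse⟩
  choose x hxA hxB using step
  let next : State → State := fun s =>
    ⟨(insert (x s) s.1.1, s.1.2 ∩ G.neighborSet (x s)), s.2.1.insert _,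
      Set.inter_subset_left.trans s.2.2.1, hxB s, by
        rintro a (rfl | ha) b ⟨hb, hxb⟩
        exacts [hxb, s.2.2.2.2 a ha b hb]⟩
  let s : ℕ → State := fun n =>
    next^[n] ⟨(∅, B₀), Set.finite_empty, subset_rfl, hB₀, by simp⟩
  have s_succ : ∀ n, s (n + 1) = next (s n) := fun n => Function.iterate_succ_apply' _ _ _
  have hA : Monotone fun n => (s n).1.1 := monotone_nat_of_le_succ fun n => by
    rw [s_succ]; exact Set.subset_insert _ _
  refine hG (hasInfinitePath_of_antitone_subset_neighborSet (fun n => x (s n)) ?_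
    (B := fun n => (s n).1.2)
    (antitone_nat_of_succ_le fun n => by rw [s_succ]; exact Set.inter_subset_left)
    (fun n => (s n).2.2.2.1) fun n => by rw [s_succ]; exact Set.inter_subset_right)
  refine Function.Injective.of_lt_imp_ne fun m n hmn heq => hxA (s n) ?_
  have : x (s m) ∈ (s (m + 1)).1.1 := by rw [s_succ]; exact Set.mem_insert _ _
  exact heq ▸ hA (Nat.succ_le_of_lt hmn) this

end SimpleGraph

theorem stmt6_general
    (G : SimpleGraph (Ordinal × ℕ)) (V : Set (Ordinal × ℕ))
    (hE : ∀ x y : Ordinal × ℕ, G.Adj x y → x ∈ V ∧ y ∈ V)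
    (hG : ¬ HasInfinitePath G)
    (C : Set (Ordinal × ℕ))
    (hCinf : C.Infinite) :
    ∃ A B : Set (Ordinal × ℕ),
      A ⊆ V ∧ A.Finite ∧ B ⊆ C ∧ B.Infinite ∧
      (∀ x ∈ A, ∀ y ∈ B, G.Adj x y) ∧
      (∀ v ∉ A, ∀ x ∈ B, ∀ y ∈ B, G.Adj v x → G.Adj v y → x = y) ∧
      IsIndependent G B := by
  obtain ⟨C', hC'C, hC', hC'indep⟩ := SimpleGraph.exists_infinite_isIndependent_subset hG hCinf
  obtain ⟨A, B, hA, hBC', hB, hAB, hsparse⟩ :=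
    SimpleGraph.exists_finite_complete_to_sparse_subset hG hC'
  obtain ⟨b, hb⟩ := hB.nonempty
  refine ⟨A, B, fun a ha => (hE a b (hAB a ha b hb)).1, hA, hBC'.trans hC'C, hB, hAB,
    fun v hv x hx y hy hvx hvy => hsparse v hv ⟨hx, hvx⟩ ⟨hy, hvy⟩,
    fun x hx y hy => hC'indep x (hBC' hx) y (hBC' hy)⟩

/-- Let `G = (V, E)` be a graph with `V ⊆ ω₂ × ω` and no infinite path, let `β < ω₂` and
let `C ⊆ V ∩ ({β} × ω)` be infinite.  Then there are a finite set `A` of vertices and an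
infinite `B ⊆ C` such that every element of `A` is adjacent to every element of `B`,
every vertex not in `A` is adjacent to at most one element of `B`, and `B` is
independent. -/
theorem stmt6
    (G : SimpleGraph (Ordinal × ℕ)) (V : Set (Ordinal × ℕ))
    (hV : ∀ p ∈ V, p.1 < omega2)
    (hE : ∀ x y : Ordinal × ℕ, G.Adj x y → x ∈ V ∧ y ∈ V)
    (hG : ¬ HasInfinitePath G)
    (β : Ordinal) (hβ : β < omega2)
    (C : Set (Ordinal × ℕ))
    (hC : C ⊆ V ∩ {p : Ordinal × ℕ | p.1 = β})
    (hCinf : C.Infinite) :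
    ∃ A B : Set (Ordinal × ℕ),
      A ⊆ V ∧ A.Finite ∧ B ⊆ C ∧ B.Infinite ∧
      (∀ x ∈ A, ∀ y ∈ B, G.Adj x y) ∧
      (∀ v ∉ A, ∀ x ∈ B, ∀ y ∈ B, G.Adj v x → G.Adj v y → x = y) ∧
      IsIndependent G B :=
  stmt6_general G V hE hG C hCinf
end

section
/- Let V ⊆ ω₂ × ω be of full type ω*·ω₂ and let G = (V, E) be a graph with no infinite path. Then there exists a set W ⊆ V of full type ω*·ω₂ such that the induced subgraph H = (W, E ∩ [W]²) has clean columns. -/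
/-- The `β`-th column of `W ⊆ ω₂ × ω`. -/
def column (W : Set (Ordinal × ℕ)) (β : Ordinal) : Set (Ordinal × ℕ) :=
  {p ∈ W | p.1 = β}

/-- `W ⊆ ω₂ × ω` is of full type `ω*·ω₂`: the set of `β < ω₂` with infinite `β`-th
column has cardinality `ℵ₂`. -/
def FullType (W : Set (Ordinal × ℕ)) : Prop :=
  Cardinal.mk {β : Ordinal | β < omega2 ∧ (column W β).Infinite} = Cardinal.aleph 2

/-- The graph with vertex set `W` (and adjacency inherited from `G`) has clean columns:
every column is empty or infinite, every column is independent, and every vertex of `W`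
has at most one neighbour in each column of `W`. -/
def CleanColumns (G : SimpleGraph (Ordinal × ℕ)) (W : Set (Ordinal × ℕ)) : Prop :=
  (∀ β : Ordinal, column W β = ∅ ∨ (column W β).Infinite) ∧
  (∀ β : Ordinal, IsIndependent G (column W β)) ∧
  (∀ v ∈ W, ∀ β : Ordinal, ∀ x ∈ column W β, ∀ y ∈ column W β,
    G.Adj v x → G.Adj v y → x = y)

/-! A rayless graph carries Schmidt's well-founded rank: every vertex set becomes, after deleting
a finite set, a disjoint union of components of smaller rank. We induct on the rank of `V`.
Deleting the finite set keeps the `ℵ₂` infinite columns infinite, and edges stay inside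
components, so a vertex has all its neighbours in its own component.

* If `ℵ₂` columns meet every component in a finite set, each of them contains infinitely many
  vertices from pairwise distinct components; these pieces have clean columns.
* Otherwise `ℵ₂` columns meet some component in an infinite set. If `ℵ₂` of them use the same
  component, it has full type and smaller rank. If not, `ℵ₂` of them use pairwise distinct
  components, and an infinite independent subset of each intersection (infinite Ramsey: an
  infinite clique would contain a ray) leaves no edges inside or between the pieces. -/

theorem Function.injective_of_mem_of_succ_subset_diff {α : Type*} {f : ℕ → α} {S : ℕ → Set α}
    (hf : ∀ n, f n ∈ S n) (hS : ∀ n, S (n + 1) ⊆ S n \ {f n}) : Function.Injective f := by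
  have hanti : Antitone S := antitone_nat_of_succ_le fun n => (hS n).trans Set.sdiff_subset
  have hne : ∀ m n, m < n → f n ≠ f m := fun m n hmn =>
    (hS m (hanti (Nat.succ_le_of_lt hmn) (hf n))).2
  intro m n h
  rcases lt_trichotomy m n with hmn | rfl | hnm
  · exact absurd h.symm (hne m n hmn)
  · rfl
  · exact absurd h (hne n m hnm)

namespace SimpleGraph

variable {α : Type*} (G : SimpleGraph α)

/-- The subgraph of `G` induced on `U`, as a graph on all of `α`. -/
def restrictTo (U : Set α) : SimpleGraph α where
  Adj a b := a ∈ U ∧ b ∈ U ∧ G.Adj a b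
  symm := ⟨fun _ _ h => ⟨h.2.1, h.1, h.2.2.symm⟩⟩
  loopless := ⟨fun _ h => G.irrefl h.2.2⟩

def componentIn (U : Set α) (x : α) : Set α :=
  {y ∈ U | (G.restrictTo U).Reachable x y}

variable {G} {U : Set α} {x y : α}

theorem componentIn_subset : G.componentIn U x ⊆ U := fun _ h => h.1

theorem mem_componentIn_self (hx : x ∈ U) : x ∈ G.componentIn U x := ⟨hx, .refl _⟩

theorem componentIn_eq_of_mem (hy : y ∈ G.componentIn U x) :
    G.componentIn U y = G.componentIn U x := by
  ext z
  exact ⟨fun hz => ⟨hz.1, hy.2.trans hz.2⟩, fun hz => ⟨hz.1, hy.2.symm.trans hz.2⟩⟩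

theorem componentIn_eq_of_adj (hx : x ∈ U) (hy : y ∈ U) (h : G.Adj x y) :
    G.componentIn U y = G.componentIn U x :=
  componentIn_eq_of_mem ⟨hy, (show (G.restrictTo U).Adj x y from ⟨hx, hy, h⟩).reachable⟩

theorem reachable_restrictTo_componentIn (h : (G.restrictTo U).Reachable x y) :
    (G.restrictTo (G.componentIn U x)).Reachable x y := by
  rw [reachable_iff_reflTransGen] at h ⊢
  induction h with
  | refl => rfl
  | tail hab hbc ih =>
    obtain ⟨hb, hc, hadj⟩ := hbc
    exact ih.tail ⟨⟨hb, (reachable_iff_reflTransGen _ _).2 hab⟩,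
      ⟨hc, (reachable_iff_reflTransGen _ _).2 (hab.tail ⟨hb, hc, hadj⟩)⟩, hadj⟩

theorem componentIn_componentIn :
    G.componentIn (G.componentIn U x) x = G.componentIn U x :=
  Set.Subset.antisymm componentIn_subset fun _ hy => ⟨hy, reachable_restrictTo_componentIn hy.2⟩

/-- Cut the path at its last visit to `v`. -/
theorem exists_adj_reachable_diff_singleton {v : α} (h : (G.restrictTo U).Reachable v y)
    (hyv : y ≠ v) :
    ∃ w, G.Adj v w ∧ w ∈ U \ {v} ∧ (G.restrictTo (U \ {v})).Reachable w y := by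
  rw [reachable_iff_reflTransGen] at h
  induction h with
  | refl => exact absurd rfl hyv
  | @tail b c _ hbc ih =>
    obtain ⟨hb, hc, hadj⟩ := hbc
    by_cases hbv : b = v
    · subst hbv
      exact ⟨c, hadj, ⟨hc, hyv⟩, .refl _⟩
    · obtain ⟨w, hvw, hw, hwb⟩ := ih hbv
      exact ⟨w, hvw, hw, hwb.trans
        (show (G.restrictTo (U \ {v})).Adj b c from ⟨⟨hb, hbv⟩, ⟨hc, hyv⟩, hadj⟩).reachable⟩

theorem hasInfinitePath_of_forall_exists_adj {P : α → Set α → Prop}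
    (hmem : ∀ v C, P v C → v ∈ C)
    (hstep : ∀ v C, P v C → ∃ w C', P w C' ∧ C' ⊆ C \ {v} ∧ G.Adj v w)
    {v₀ : α} {C₀ : Set α} (h₀ : P v₀ C₀) : HasInfinitePath G := by
  choose! next nextSet hP hsub hadj using hstep
  let seq : ℕ → α × Set α := fun n => (fun p => (next p.1 p.2, nextSet p.1 p.2))^[n] (v₀, C₀)
  have hseq_succ : ∀ n, seq (n + 1) = (next (seq n).1 (seq n).2, nextSet (seq n).1 (seq n).2) :=
    fun n => Function.iterate_succ_apply' _ _ _
  have hseq : ∀ n, P (seq n).1 (seq n).2 := by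
    intro n
    induction n with
    | zero => exact h₀
    | succ n ih => rw [hseq_succ]; exact hP _ _ ih
  refine ⟨fun n => (seq n).1,
    Function.injective_of_mem_of_succ_subset_diff (S := fun n => (seq n).2)
      (fun n => hmem _ _ (hseq n)) fun n => ?_, fun n => ?_⟩
  · rw [hseq_succ]; exact hsub _ _ (hseq n)
  · simp only [hseq_succ]; exact hadj _ _ (hseq n)

/-- Schmidt's rank of rayless graphs, as a well-founded predicate in place of an ordinal. -/
inductive Ranked : Set α → Prop
  | intro (U S : Set α) (hS : S.Finite) (h : ∀ x ∈ U \ S, Ranked (G.componentIn (U \ S) x)) :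
      Ranked U

theorem exists_not_ranked_componentIn {S : Set α} (hU : ¬G.Ranked U) (hS : S.Finite) :
    ∃ x ∈ U \ S, ¬G.Ranked (G.componentIn (U \ S) x) := by
  by_contra! h
  exact hU (.intro U S hS h)

theorem exists_adj_not_ranked_componentIn {v : α} (hU : ¬G.Ranked U)
    (hconn : G.componentIn U v = U) :
    ∃ w, G.Adj v w ∧ w ∈ U \ {v} ∧ ¬G.Ranked (G.componentIn (U \ {v}) w) := by
  obtain ⟨x, hx, hxK⟩ := exists_not_ranked_componentIn hU (Set.finite_singleton v)
  obtain ⟨w, hvw, hw, hwx⟩ :=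
    exists_adj_reachable_diff_singleton (hconn.symm ▸ hx.1 : x ∈ G.componentIn U v).2 hx.2
  refine ⟨w, hvw, hw, ?_⟩
  rwa [← componentIn_eq_of_mem ⟨hx, hwx⟩]

/-- An unranked set yields an infinite sequence of unranked connected sets, each a component of
its predecessor minus one vertex adjacent to the next; these vertices form a ray. -/
theorem ranked_of_not_hasInfinitePath (hG : ¬HasInfinitePath G) (U : Set α) : G.Ranked U := by
  by_contra hU
  obtain ⟨x, hx, hxU⟩ := exists_not_ranked_componentIn hU Set.finite_empty
  refine hG (hasInfinitePath_of_forall_exists_adj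
    (P := fun v C => v ∈ C ∧ ¬G.Ranked C ∧ G.componentIn C v = C) (fun _ _ h => h.1)
    (fun v C ⟨_, hC, hconn⟩ => ?_) ⟨mem_componentIn_self hx, hxU, componentIn_componentIn⟩)
  obtain ⟨w, hvw, hw, hwK⟩ := exists_adj_not_ranked_componentIn hC hconn
  exact ⟨w, _, ⟨mem_componentIn_self hw, hwK, componentIn_componentIn⟩, componentIn_subset, hvw⟩

theorem exists_infinite_subset_forall_adj_or_forall_not_adj {X : Set α} (hX : X.Infinite)
    (a : α) : ∃ Y ⊆ X \ {a}, Y.Infinite ∧ ((∀ y ∈ Y, G.Adj a y) ∨ ∀ y ∈ Y, ¬G.Adj a y) := by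
  have h := hX.sdiff (Set.finite_singleton a)
  rw [← Set.inter_union_sdiff (X \ {a}) {y | G.Adj a y}, Set.infinite_union] at h
  rcases h with h | h
  · exact ⟨_, Set.inter_subset_left, h, .inl fun y hy => hy.2⟩
  · exact ⟨_, Set.sdiff_subset, h, .inr fun y hy => hy.2⟩

theorem exists_seq_adj_iff_of_lt {A : Set α} (hA : A.Infinite) :
    ∃ (a : ℕ → α) (c : ℕ → Prop), Function.Injective a ∧ (∀ n, a n ∈ A) ∧
      ∀ m n, m < n → (G.Adj (a m) (a n) ↔ c m) := by
  have hstep : ∀ X : {X : Set α // X.Infinite}, ∃ a ∈ X.1, ∃ Y : {X : Set α // X.Infinite},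
      Y.1 ⊆ X.1 \ {a} ∧ ((∀ y ∈ Y.1, G.Adj a y) ∨ ∀ y ∈ Y.1, ¬G.Adj a y) := fun X => by
    obtain ⟨a, ha⟩ := X.2.nonempty
    obtain ⟨Y, hYX, hY, hside⟩ := exists_infinite_subset_forall_adj_or_forall_not_adj X.2 a
    exact ⟨a, ha, ⟨Y, hY⟩, hYX, hside⟩
  choose pt hpt next hsub hside using hstep
  let X : ℕ → {X : Set α // X.Infinite} := fun n => next^[n] ⟨A, hA⟩
  have hX_succ : ∀ n, X (n + 1) = next (X n) := fun n => Function.iterate_succ_apply' _ _ _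
  have hX_sub : ∀ n, (X (n + 1)).1 ⊆ (X n).1 \ {pt (X n)} := fun n => hX_succ n ▸ hsub (X n)
  have hanti : Antitone fun n => (X n).1 :=
    antitone_nat_of_succ_le fun n => (hX_sub n).trans Set.sdiff_subset
  refine ⟨fun n => pt (X n), fun m => ∀ y ∈ (next (X m)).1, G.Adj (pt (X m)) y,
    Function.injective_of_mem_of_succ_subset_diff (fun n => hpt (X n)) hX_sub,
    fun n => hanti (Nat.zero_le n) (hpt _), fun m n hmn => ?_⟩
  have hn : pt (X n) ∈ (next (X m)).1 := hX_succ m ▸ hanti hmn (hpt _)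
  rcases hside (X m) with h | h
  · exact ⟨fun _ => h, fun hc => hc _ hn⟩
  · exact ⟨fun hadj => absurd hadj (h _ hn), fun hc => hc _ hn⟩

theorem exists_infinite_isIndependent (hG : ¬HasInfinitePath G) {A : Set α} (hA : A.Infinite) :
    ∃ B ⊆ A, B.Infinite ∧ IsIndependent G B := by
  obtain ⟨a, c, ha, haA, hac⟩ := exists_seq_adj_iff_of_lt (G := G) hA
  have hray : ¬{m | c m}.Infinite := fun hinf =>
    hG ⟨fun k => a (Nat.nth c k), ha.comp (Nat.nth_injective hinf), fun k =>
      (hac _ _ ((Nat.nth_lt_nth hinf).2 k.lt_succ_self)).2 (Nat.nth_mem_of_infinite hinf k)⟩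
  have hc : {m | ¬c m}.Infinite := (Set.not_infinite.1 hray).infinite_compl
  refine ⟨a '' {m | ¬c m}, Set.image_subset_iff.2 fun m _ => haA m, hc.image ha.injOn, ?_⟩
  rintro _ ⟨m, hm, rfl⟩ _ ⟨n, hn, rfl⟩ hadj
  rcases lt_trichotomy m n with hmn | rfl | hnm
  · exact hm ((hac m n hmn).1 hadj)
  · exact G.irrefl hadj
  · exact hn ((hac n m hnm).1 hadj.symm)

end SimpleGraph

section Cardinal

universe u

open Cardinal

theorem mk_le_aleph_two_of_subset_Iio {T : Set Ordinal} (hT : T ⊆ Set.Iio omega2) :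
    #T ≤ Cardinal.aleph 2 :=
  calc #T ≤ #(Set.Iio omega2) := mk_le_mk_of_subset hT
    _ = Cardinal.aleph 2 := by simp [omega2]

theorem mk_sep_eq_or_mk_sep_not_eq {α : Type*} {κ : Cardinal} (hκ : ℵ₀ ≤ κ) {T : Set α}
    (hT : #T = κ) (Q : α → Prop) : #{x ∈ T | Q x} = κ ∨ #{x ∈ T | ¬Q x} = κ := by
  by_contra! h
  have hlt : ∀ R : Set α, R ⊆ T → #R ≠ κ → #R < κ := fun R hR hne =>
    (hT ▸ mk_le_mk_of_subset hR).lt_of_ne hne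
  have hsplit : T ⊆ {x ∈ T | Q x} ∪ {x ∈ T | ¬Q x} := fun x hx => by
    by_cases hQ : Q x
    exacts [.inl ⟨hx, hQ⟩, .inr ⟨hx, hQ⟩]
  refine (hT ▸ (mk_le_mk_of_subset hsplit).trans (mk_union_le _ _)).not_gt ?_
  exact add_lt_of_lt hκ (hlt _ (Set.sep_subset _ _) h.1) (hlt _ (Set.sep_subset _ _) h.2)

theorem exists_mk_fiber_eq_or_exists_injOn {β γ : Type u} {c : Cardinal.{u}} (hc : ℵ₀ ≤ c)
    {T : Set β} (hT : #T = Order.succ c) (f : β → γ) :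
    (∃ i, #(T ∩ f ⁻¹' {i} : Set β) = Order.succ c) ∨
      ∃ T' ⊆ T, #T' = Order.succ c ∧ Set.InjOn f T' := by
  by_cases hfib : ∀ i, #(T ∩ f ⁻¹' {i} : Set β) ≤ c
  · right
    obtain ⟨T', hT'T, hbij⟩ := Set.exists_subset_bijOn T f
    refine ⟨T', hT'T, ?_, hbij.injOn⟩
    rw [← mk_image_eq_of_injOn f T' hbij.injOn, hbij.image_eq]
    refine le_antisymm (hT ▸ mk_image_le) (Order.succ_le_of_lt (not_le.1 fun himage => ?_))
    have hcover : T ⊆ ⋃ i ∈ f '' T, T ∩ f ⁻¹' {i} := fun x hx =>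
      Set.mem_biUnion (Set.mem_image_of_mem f hx) ⟨hx, rfl⟩
    have : #T ≤ c :=
      calc #T ≤ #(f '' T) * ⨆ i : f '' T, #(T ∩ f ⁻¹' {i.1} : Set β) :=
            (mk_le_mk_of_subset hcover).trans (mk_biUnion_le _ _)
        _ ≤ c * c := mul_le_mul' himage (ciSup_le' fun i => hfib i)
        _ = c := mul_eq_self hc
    exact (Order.lt_succ_of_not_isMax (not_isMax c)).not_ge (hT ▸ this)
  · obtain ⟨i, hi⟩ := not_forall.1 hfib
    exact .inl ⟨i, le_antisymm (hT ▸ mk_le_mk_of_subset Set.inter_subset_left)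
      (Order.succ_le_of_lt (not_le.1 hi))⟩

end Cardinal

theorem Set.Infinite.exists_subset_injOn_of_finite_fiber {α β : Type*} {s : Set α}
    (hs : s.Infinite) {f : α → β} (hf : ∀ x ∈ s, {y ∈ s | f y = f x}.Finite) :
    ∃ t ⊆ s, t.Infinite ∧ Set.InjOn f t := by
  obtain ⟨t, hts, hbij⟩ := Set.exists_subset_bijOn s f
  have hcover : s ⊆ ⋃ i ∈ f '' s, {y ∈ s | f y = i} := fun y hy =>
    Set.mem_biUnion (Set.mem_image_of_mem f hy) ⟨hy, rfl⟩
  have himage : (f '' s).Infinite := fun hfin =>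
    hs ((hfin.biUnion fun _ ⟨x, hx, hi⟩ => hi ▸ hf x hx).subset hcover)
  exact ⟨t, hts, Set.Infinite.of_image f (hbij.image_eq ▸ himage), hbij.injOn⟩

open Cardinal SimpleGraph

section Columns

variable {G : SimpleGraph (Ordinal × ℕ)} {U W : Set (Ordinal × ℕ)} {T : Set Ordinal}

theorem fullType_of_subset (hT : #T = Cardinal.aleph 2)
    (hsub : T ⊆ {β | β < omega2 ∧ (column W β).Infinite}) : FullType W :=
  le_antisymm (mk_le_aleph_two_of_subset_Iio fun _ h => h.1) (hT ▸ mk_le_mk_of_subset hsub)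

theorem FullType.sdiff_of_finite {S : Set (Ordinal × ℕ)} (hW : FullType W) (hS : S.Finite) :
    FullType (W \ S) := by
  refine fullType_of_subset hW fun β hβ => ⟨hβ.1, ?_⟩
  have hcol : column (W \ S) β = column W β \ S := by
    ext p
    simp only [column, Set.mem_sdiff, Set.mem_ofPred_eq]
    tauto
  exact hcol ▸ hβ.2.sdiff hS

theorem mem_column_biUnion {B : Ordinal → Set (Ordinal × ℕ)} (hB : ∀ β ∈ T, ∀ p ∈ B β, p.1 = β)
    {β : Ordinal} {p : Ordinal × ℕ} : p ∈ column (⋃ γ ∈ T, B γ) β ↔ β ∈ T ∧ p ∈ B β := by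
  simp only [column, Set.mem_ofPred_eq, Set.mem_iUnion₂]
  constructor
  · rintro ⟨⟨γ, hγ, hp⟩, rfl⟩
    exact hB γ hγ p hp ▸ ⟨hγ, hp⟩
  · exact fun ⟨hβ, hp⟩ => ⟨⟨β, hβ, hp⟩, hB β hβ p hp⟩

theorem fullType_and_cleanColumns_biUnion {B : Ordinal → Set (Ordinal × ℕ)}
    (hT : #T = Cardinal.aleph 2) (hTlt : T ⊆ Set.Iio omega2) (hB : ∀ β ∈ T, ∀ p ∈ B β, p.1 = β)
    (hBinf : ∀ β ∈ T, (B β).Infinite) (hBind : ∀ β ∈ T, IsIndependent G (B β))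
    (hBnbr : ∀ β ∈ T, ∀ γ ∈ T, ∀ v ∈ B β, ∀ x ∈ B γ, ∀ y ∈ B γ,
      G.Adj v x → G.Adj v y → x = y) :
    FullType (⋃ β ∈ T, B β) ∧ CleanColumns G (⋃ β ∈ T, B β) := by
  have hcol : ∀ β ∈ T, column (⋃ γ ∈ T, B γ) β = B β := fun β hβ =>
    Set.ext fun _ => (mem_column_biUnion hB).trans (and_iff_right hβ)
  have hcol_empty : ∀ β ∉ T, column (⋃ γ ∈ T, B γ) β = ∅ := fun β hβ =>
    Set.eq_empty_of_forall_notMem fun _ hp => hβ ((mem_column_biUnion hB).1 hp).1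
  refine ⟨fullType_of_subset hT fun β hβ => ⟨hTlt hβ, hcol β hβ ▸ hBinf β hβ⟩,
    fun β => ?_, fun β => ?_, fun v hv β x hx y hy => ?_⟩
  · by_cases hβ : β ∈ T
    exacts [.inr (hcol β hβ ▸ hBinf β hβ), .inl (hcol_empty β hβ)]
  · by_cases hβ : β ∈ T
    · exact hcol β hβ ▸ hBind β hβ
    · exact hcol_empty β hβ ▸ fun _ h => absurd h (Set.notMem_empty _)
  · obtain ⟨γ, hγ, hvγ⟩ := Set.mem_iUnion₂.1 hv
    obtain ⟨hβ, hxβ⟩ := (mem_column_biUnion hB).1 hx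
    exact hBnbr γ hγ β hβ v hvγ x hxβ y ((mem_column_biUnion hB).1 hy).2

theorem exists_cleanColumns_of_finite_column_componentIn (hT : #T = Cardinal.aleph 2)
    (hTlt : T ⊆ Set.Iio omega2) (hinf : ∀ β ∈ T, (column U β).Infinite)
    (hfin : ∀ β ∈ T, ∀ x ∈ column U β, (column (G.componentIn U x) β).Finite) :
    ∃ W ⊆ U, FullType W ∧ CleanColumns G W := by
  have hpieces : ∀ β ∈ T, ∃ B ⊆ column U β, B.Infinite ∧ Set.InjOn (G.componentIn U) B :=
    fun β hβ => (hinf β hβ).exists_subset_injOn_of_finite_fiber fun x hx =>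
      (hfin β hβ x hx).subset fun y ⟨hy, hyx⟩ => ⟨hyx ▸ mem_componentIn_self hy.1, hy.2⟩
  choose! B hBcol hBinf hBinj using hpieces
  have hBU : ∀ β ∈ T, ∀ p ∈ B β, p ∈ U := fun β hβ p hp => (hBcol β hβ hp).1
  refine ⟨_, Set.iUnion₂_subset fun β hβ => hBU β hβ, fullType_and_cleanColumns_biUnion hT hTlt
    (fun β hβ p hp => (hBcol β hβ hp).2) hBinf (fun β hβ x hx y hy hxy => ?_)
    (fun β hβ γ hγ v hv x hx y hy hvx hvy => ?_)⟩
  · have hyx := hBinj β hβ hy hx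
      (componentIn_eq_of_adj (hBU β hβ x hx) (hBU β hβ y hy) hxy)
    exact G.irrefl (hyx ▸ hxy)
  · exact hBinj γ hγ hx hy <|
      (componentIn_eq_of_adj (hBU β hβ v hv) (hBU γ hγ x hx) hvx).trans
        (componentIn_eq_of_adj (hBU β hβ v hv) (hBU γ hγ y hy) hvy).symm

theorem exists_cleanColumns_of_injOn_componentIn (hG : ¬HasInfinitePath G)
    (hT : #T = Cardinal.aleph 2) (hTlt : T ⊆ Set.Iio omega2) {x : Ordinal → Ordinal × ℕ}
    (hinf : ∀ β ∈ T, (column (G.componentIn U (x β)) β).Infinite)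
    (hinj : Set.InjOn (fun β => G.componentIn U (x β)) T) :
    ∃ W ⊆ U, FullType W ∧ CleanColumns G W := by
  choose! B hBcol hBinf hBind using fun β hβ => exists_infinite_isIndependent hG (hinf β hβ)
  have hBC : ∀ β ∈ T, ∀ p ∈ B β, p ∈ G.componentIn U (x β) := fun β hβ p hp => (hBcol β hβ hp).1
  have hcross : ∀ β ∈ T, ∀ γ ∈ T, ∀ v ∈ B β, ∀ w ∈ B γ, G.Adj v w → β = γ := by
    intro β hβ γ hγ v hv w hw hvw
    have hvC := hBC β hβ v hv
    have hwC := hBC γ hγ w hw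
    refine hinj hβ hγ (show G.componentIn U (x β) = G.componentIn U (x γ) from ?_)
    rw [← componentIn_eq_of_mem hvC, ← componentIn_eq_of_mem hwC]
    exact (componentIn_eq_of_adj (componentIn_subset hvC) (componentIn_subset hwC) hvw).symm
  refine ⟨_, Set.iUnion₂_subset fun β hβ p hp => componentIn_subset (hBC β hβ p hp),
    fullType_and_cleanColumns_biUnion hT hTlt (fun β hβ p hp => (hBcol β hβ hp).2) hBinf hBind
    fun β hβ γ hγ v hv w hw _ _ hvw _ => ?_⟩
  obtain rfl := hcross β hβ γ hγ v hv w hw hvw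
  exact absurd hvw (hBind β hβ v hv w hw)

theorem exists_cleanColumns_of_infinite_column_componentIn (hG : ¬HasInfinitePath G)
    (hT : #T = Cardinal.aleph 2) (hTlt : T ⊆ Set.Iio omega2)
    (hcol : ∀ β ∈ T, ∃ x ∈ column U β, (column (G.componentIn U x) β).Infinite)
    (ih : ∀ x ∈ U, FullType (G.componentIn U x) →
      ∃ W ⊆ G.componentIn U x, FullType W ∧ CleanColumns G W) :
    ∃ W ⊆ U, FullType W ∧ CleanColumns G W := by
  choose! x hxU hx using hcol
  have hsucc : Order.succ (Cardinal.aleph 1) = Cardinal.aleph 2 := by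
    rw [succ_aleph, one_add_one_eq_two]
  rcases exists_mk_fiber_eq_or_exists_injOn (aleph0_le_aleph 1) (hT.trans hsucc.symm)
    (fun β => G.componentIn U (x β)) with ⟨C, hC⟩ | ⟨T', hT'T, hT', hinj⟩
  · obtain ⟨⟨β₀, hβ₀, rfl⟩⟩ := mk_ne_zero_iff.1 (hC ▸ (succ_pos _).ne')
    have hfull : FullType (G.componentIn U (x β₀)) := by
      refine fullType_of_subset (hC.trans hsucc) fun β hβ => ⟨hTlt hβ.1, ?_⟩
      have hβC : G.componentIn U (x β) = G.componentIn U (x β₀) := hβ.2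
      exact hβC ▸ hx β hβ.1
    obtain ⟨W, hWC, hW⟩ := ih (x β₀) (hxU β₀ hβ₀).1 hfull
    exact ⟨W, hWC.trans componentIn_subset, hW⟩
  · exact exists_cleanColumns_of_injOn_componentIn hG (hT'.trans hsucc) (hT'T.trans hTlt)
      (fun β hβ => hx β (hT'T hβ)) hinj

theorem SimpleGraph.Ranked.exists_cleanColumns (hG : ¬HasInfinitePath G) (hU : G.Ranked U)
    (hfull : FullType U) : ∃ W ⊆ U, FullType W ∧ CleanColumns G W := by
  induction hU with
  | intro U S hS _ ih =>
    have hfull' := hfull.sdiff_of_finite hS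
    obtain ⟨W, hWU, hW⟩ : ∃ W ⊆ U \ S, FullType W ∧ CleanColumns G W := by
      rcases mk_sep_eq_or_mk_sep_not_eq (aleph0_le_aleph 2) hfull'
        fun β => ∃ x ∈ column (U \ S) β, (column (G.componentIn (U \ S) x) β).Infinite with h | h
      · exact exists_cleanColumns_of_infinite_column_componentIn hG h (fun β hβ => hβ.1.1)
          (fun β hβ => hβ.2) ih
      · exact exists_cleanColumns_of_finite_column_componentIn h (fun β hβ => hβ.1.1)
          (fun β hβ => hβ.1.2) fun β hβ x hx => Set.not_infinite.1 fun hinf => hβ.2 ⟨x, hx, hinf⟩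
    exact ⟨W, hWU.trans Set.sdiff_subset, hW⟩

end Columns

theorem stmt7_general
    (G : SimpleGraph (Ordinal × ℕ)) (V : Set (Ordinal × ℕ))
    (hfull : FullType V)
    (hG : ¬ HasInfinitePath G) :
    ∃ W ⊆ V, FullType W ∧ CleanColumns G W :=
  (ranked_of_not_hasInfinitePath hG V).exists_cleanColumns hG hfull

/-- If `V ⊆ ω₂ × ω` is of full type `ω*·ω₂` and `G = (V, E)` has no infinite path, then
there is `W ⊆ V` of full type `ω*·ω₂` such that the induced subgraph on `W` has clean
columns. -/
theorem stmt7
    (G : SimpleGraph (Ordinal × ℕ)) (V : Set (Ordinal × ℕ))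
    (hV : ∀ p ∈ V, p.1 < omega2)
    (hfull : FullType V)
    (hE : ∀ x y : Ordinal × ℕ, G.Adj x y → x ∈ V ∧ y ∈ V)
    (hG : ¬ HasInfinitePath G) :
    ∃ W ⊆ V, FullType W ∧ CleanColumns G W :=
  stmt7_general G V hfull hG
end
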